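/- Let F be a nonempty finite type, β > 0, p : F → ℝ, π_ref a positive pmf on F, with Z = ∑_{f∈F} π_ref(f)·exp(p(f)/β) and π*(f) = π_ref(f)·exp(p(f)/β)/Z. Then the maximizer of the KL-regularized objective is unique: if π is a positive pmf on F with L_β(π) = L_β(π*), then π = π*. -/
import Mathlib


open Real Finset

/-- FAAF: the maximizer of the KL-regularized objective is unique. -/
theorem faaf_gibbs_policy_unique_maximizer
    {F : Type*} [Fintype F] [Nonempty F]
    (β : ℝ) (hβ : 0 < β) (p : F → ℝ)
    (πref : F → ℝ) (href_pos : ∀ f, 0 < πref f) (href_sum : ∑ f, πref f = 1)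
    (Z : ℝ) (hZ : Z = ∑ f, πref f * Real.exp (p f / β))
    (πstar : F → ℝ) (hstar : ∀ f, πstar f = πref f * Real.exp (p f / β) / Z)
    (q : F → ℝ) (hq_pos : ∀ f, 0 < q f) (hq_sum : ∑ f, q f = 1)
    (heq : (∑ f, q f * p f) - β * (∑ f, q f * Real.log (q f / πref f)) =
      (∑ f, πstar f * p f) - β * (∑ f, πstar f * Real.log (πstar f / πref f))) :
    q = πstar := by
  have hZpos : 0 < Z := by
    rw [hZ]
    exact Finset.sum_pos (fun f _ => mul_pos (href_pos f) (Real.exp_pos _))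
      Finset.univ_nonempty
  have hs_pos : ∀ f, 0 < πstar f := by
    intro f
    rw [hstar]
    exact div_pos (mul_pos (href_pos f) (Real.exp_pos _)) hZpos
  have hs_sum : ∑ f, πstar f = 1 := by
    simp only [hstar]
    rw [← Finset.sum_div, ← hZ, div_self hZpos.ne']
  -- log (πstar f / πref f) = p f / β - log Z
  have hratio : ∀ f, πstar f / πref f = Real.exp (p f / β) / Z := by
    intro f
    rw [hstar, div_div, mul_comm Z (πref f), mul_div_mul_left _ _ (href_pos f).ne']
  have hlog : ∀ f, Real.log (πstar f / πref f) = p f / β - Real.log Z := by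
    intro f
    rw [hratio f, Real.log_div (Real.exp_ne_zero _) hZpos.ne', Real.log_exp]
  -- decomposition of log (π f / πref f)
  have hdecomp : ∀ (pp : F → ℝ), (∀ f, 0 < pp f) →
      ∀ f, Real.log (pp f / πref f) =
        Real.log (pp f / πstar f) + (p f / β - Real.log Z) := by
    intro pp hpp f
    rw [← hlog f, ← Real.log_mul (div_pos (hpp f) (hs_pos f)).ne'
      (div_pos (hs_pos f) (href_pos f)).ne']
    rw [div_mul_div_comm, mul_comm (pp f) (πstar f),
      mul_div_mul_left _ _ (hs_pos f).ne']
  -- rewrite objective for a positive pmf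
  have hobj : ∀ (pp : F → ℝ), (∀ f, 0 < pp f) → (∑ f, pp f = 1) →
      (∑ f, pp f * p f) - β * (∑ f, pp f * Real.log (pp f / πref f)) =
        β * Real.log Z - β * (∑ f, pp f * Real.log (pp f / πstar f)) := by
    intro pp hpp hpps
    have key : ∀ f, pp f * Real.log (pp f / πref f) =
        pp f * Real.log (pp f / πstar f) + (pp f * p f / β - pp f * Real.log Z) := fun f => by
      rw [hdecomp pp hpp f]; ring
    have : ∑ f, pp f * Real.log (pp f / πref f) =
        (∑ f, pp f * Real.log (pp f / πstar f)) + ((∑ f, pp f * p f) / β - Real.log Z) := by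
      rw [Finset.sum_congr rfl (fun f _ => key f), Finset.sum_add_distrib,
        Finset.sum_sub_distrib, ← Finset.sum_div, ← Finset.sum_mul, hpps, one_mul]
    rw [this]
    field_simp
    ring
  have hKs : ∑ f, πstar f * Real.log (πstar f / πstar f) = 0 := by
    apply Finset.sum_eq_zero
    intro f _
    rw [div_self (hs_pos f).ne', Real.log_one, mul_zero]
  have hKq : ∑ f, q f * Real.log (q f / πstar f) = 0 := by
    have h1 := hobj q hq_pos hq_sum
    have h2 := hobj πstar hs_pos hs_sum
    rw [h1, h2, hKs] at heq
    have hb : β * (∑ f, q f * Real.log (q f / πstar f)) = 0 := by linarith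
    exact (mul_eq_zero.mp hb).resolve_left hβ.ne'
  -- Gibbs: each term q f * log (q f / πstar f) - (q f - πstar f) is ≥ 0 and sums to 0
  have hterm_nonneg : ∀ f, 0 ≤ q f * Real.log (q f / πstar f) - (q f - πstar f) := by
    intro f
    have hx : 0 < q f / πstar f := div_pos (hq_pos f) (hs_pos f)
    have h1 : 1 - (q f / πstar f)⁻¹ ≤ Real.log (q f / πstar f) := by
      have := Real.log_le_sub_one_of_pos (inv_pos.mpr hx)
      rw [Real.log_inv] at this
      linarith
    have h2 : (q f / πstar f)⁻¹ = πstar f / q f := by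
      rw [inv_div]
    have h3 : q f * (1 - πstar f / q f) = q f - πstar f := by
      rw [mul_sub, mul_one, mul_div_cancel₀ _ (hq_pos f).ne']
    nlinarith [hq_pos f, h1, h2, h3]
  have hsum0 : ∑ f, (q f * Real.log (q f / πstar f) - (q f - πstar f)) = 0 := by
    rw [Finset.sum_sub_distrib, hKq, Finset.sum_sub_distrib, hq_sum, hs_sum]
    ring
  have hterm0 : ∀ f, q f * Real.log (q f / πstar f) - (q f - πstar f) = 0 := by
    intro f
    have := (Finset.sum_eq_zero_iff_of_nonneg (fun f _ => hterm_nonneg f)).mp hsum0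
    exact this f (Finset.mem_univ f)
  funext f
  by_contra hne
  have hx : 0 < q f / πstar f := div_pos (hq_pos f) (hs_pos f)
  have hxne : q f / πstar f ≠ 1 := by
    intro h
    exact hne ((div_eq_one_iff_eq (hs_pos f).ne').mp h)
  have hxinvne : (q f / πstar f)⁻¹ ≠ 1 := by
    intro h
    exact hxne (by rw [← inv_inv (q f / πstar f), h, inv_one])
  have hstrict : Real.log ((q f / πstar f)⁻¹) < (q f / πstar f)⁻¹ - 1 :=
    Real.log_lt_sub_one_of_pos (inv_pos.mpr hx) hxinvne
  rw [Real.log_inv] at hstrict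
  have h2 : (q f / πstar f)⁻¹ = πstar f / q f := by rw [inv_div]
  rw [h2] at hstrict
  -- log (q/s) > 1 - s/q, so q * log(q/s) > q - s
  have hlt : q f - πstar f < q f * Real.log (q f / πstar f) := by
    have := mul_lt_mul_of_pos_left (by linarith : 1 - πstar f / q f < Real.log (q f / πstar f)) (hq_pos f)
    have h3 : q f * (1 - πstar f / q f) = q f - πstar f := by
      rw [mul_sub, mul_one, mul_div_cancel₀ _ (hq_pos f).ne']
    linarith [h3 ▸ this]
  linarith [hterm0 f]
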